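/- The function H(c) = ∫₀^∞ du/(c e^u − u) is strictly decreasing on (−∞, 0), with H(c) → 0 as c → −∞ and H(c) → −∞ as c → 0−. -/

import Mathlib

/-!
For `c < 0` and `u ≥ 0` we have `c e^u − u ≤ c e^u < 0`, so the integrand lies between
`c⁻¹ e^{-u}` and `0`. This gives integrability and `c⁻¹ ≤ H c ≤ 0`, hence `H c → 0` as
`c → −∞`; and the integrand is pointwise strictly decreasing in `c`, hence so is `H`.
As the integrand is negative, `H c` is at most its integral over `(0, 1]`, where
`c e^u − u ≥ c e − u`; thus `H c ≤ ∫₀¹ du / (c e − u) ≤ log (−c) + 1 → −∞`.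
-/

open MeasureTheory Real Filter Set

open scoped Topology

section SetIntegral

variable {X : Type*} [MeasurableSpace X] {μ : Measure X} {f g : X → ℝ} {s t : Set X}

theorem setIntegral_lt_setIntegral_of_forall_lt (hs : MeasurableSet s) (hμs : μ s ≠ 0)
    (hf : IntegrableOn f s μ) (hg : IntegrableOn g s μ) (hfg : ∀ x ∈ s, f x < g x) :
    ∫ x in s, f x ∂μ < ∫ x in s, g x ∂μ := by
  have hsupp : Function.support (g - f) ∩ s = s :=
    inter_eq_right.mpr fun x hx => (sub_pos.mpr (hfg x hx)).ne'
  have hpos : 0 < ∫ x in s, (g - f) x ∂μ := by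
    rw [setIntegral_pos_iff_support_of_nonneg_ae _ (hg.sub hf), hsupp]
    · exact pos_iff_ne_zero.mpr hμs
    · filter_upwards [ae_restrict_mem hs] with x hx
      exact sub_nonneg.mpr (hfg x hx).le
  rw [Pi.sub_def, integral_sub hg hf] at hpos
  linarith

theorem setIntegral_le_setIntegral_of_subset_of_nonpos (ht : MeasurableSet t) (hst : s ⊆ t)
    (hf : IntegrableOn f t μ) (hf0 : ∀ x ∈ t, f x ≤ 0) :
    ∫ x in t, f x ∂μ ≤ ∫ x in s, f x ∂μ := by
  have h := setIntegral_mono_set hf.neg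
    ((ae_restrict_mem ht).mono fun x hx => neg_nonneg.mpr (hf0 x hx)) hst.eventuallyLE
  simpa only [Pi.neg_apply, integral_neg, neg_le_neg_iff] using h

end SetIntegral

theorem intervalIntegral_inv_sub_le_log {a : ℝ} (ha : a < 0) :
    ∫ u in (0 : ℝ)..1, (a - u)⁻¹ ≤ log (-a) := by
  rw [intervalIntegral.integral_comp_sub_left (fun x => x⁻¹),
    integral_inv_of_neg (by linarith) (by simpa using ha), sub_zero]
  refine log_le_log (div_pos_of_neg_of_neg ha (by linarith)) ?_
  rw [div_le_iff_of_neg (by linarith)]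
  nlinarith

noncomputable def H (c : ℝ) : ℝ := ∫ u in Ioi 0, (c * exp u - u)⁻¹

section Integrand

variable {c u : ℝ}

lemma mul_exp_sub_neg (hc : c < 0) (hu : 0 ≤ u) : c * exp u - u < 0 := by
  nlinarith [mul_neg_of_neg_of_pos hc (exp_pos u)]

lemma inv_mul_exp_sub_neg (hc : c < 0) (hu : 0 ≤ u) : (c * exp u - u)⁻¹ < 0 :=
  inv_lt_zero.mpr (mul_exp_sub_neg hc hu)

lemma inv_mul_exp_neg_le_inv_mul_exp_sub (hc : c < 0) (hu : 0 ≤ u) :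
    c⁻¹ * exp (-u) ≤ (c * exp u - u)⁻¹ := by
  rw [exp_neg, ← mul_inv, inv_le_inv_of_neg (mul_neg_of_neg_of_pos hc (exp_pos u))
    (mul_exp_sub_neg hc hu)]
  linarith

lemma integrableOn_inv_mul_exp_sub (hc : c < 0) :
    IntegrableOn (fun u => (c * exp u - u)⁻¹) (Ioi 0) := by
  have hcont : ContinuousOn (fun u => (c * exp u - u)⁻¹) (Ioi 0) :=
    ContinuousOn.inv₀ (by fun_prop) fun u hu => (mul_exp_sub_neg hc (le_of_lt hu)).ne
  refine Integrable.mono' ((integrableOn_exp_neg_Ioi 0).const_mul (-c⁻¹))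
    (hcont.aestronglyMeasurable measurableSet_Ioi) ?_
  filter_upwards [ae_restrict_mem measurableSet_Ioi] with u hu
  rw [norm_of_nonpos (inv_mul_exp_sub_neg hc (le_of_lt hu)).le, neg_mul]
  exact neg_le_neg (inv_mul_exp_neg_le_inv_mul_exp_sub hc (le_of_lt hu))

lemma H_nonpos (hc : c < 0) : H c ≤ 0 :=
  setIntegral_nonpos measurableSet_Ioi fun _ hu =>
    (inv_mul_exp_sub_neg hc (le_of_lt hu)).le

lemma inv_le_H (hc : c < 0) : c⁻¹ ≤ H c := by
  calc c⁻¹ = ∫ u in Ioi 0, c⁻¹ * exp (-u) := by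
        rw [integral_const_mul, integral_exp_neg_Ioi_zero, mul_one]
    _ ≤ H c := setIntegral_mono_on ((integrableOn_exp_neg_Ioi 0).const_mul c⁻¹)
        (integrableOn_inv_mul_exp_sub hc) measurableSet_Ioi fun u hu =>
        inv_mul_exp_neg_le_inv_mul_exp_sub hc (le_of_lt hu)

lemma H_le_log_neg_add_one (hc : c < 0) : H c ≤ log (-c) + 1 := by
  have hce : c * exp 1 < 0 := mul_neg_of_neg_of_pos hc (exp_pos 1)
  have hcomp : ∀ u ∈ Ioc (0 : ℝ) 1, (c * exp u - u)⁻¹ ≤ (c * exp 1 - u)⁻¹ := fun u hu => by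
    rw [inv_le_inv_of_neg (mul_exp_sub_neg hc hu.1.le) (by linarith [hu.1])]
    nlinarith [exp_le_exp.mpr hu.2]
  have hint : IntervalIntegrable (fun u => (c * exp 1 - u)⁻¹) volume 0 1 :=
    intervalIntegral.intervalIntegrable_inv (fun u hu => by
      rw [uIcc_of_le zero_le_one] at hu
      linarith [hu.1]) (by fun_prop)
  calc H c ≤ ∫ u in Ioc 0 1, (c * exp u - u)⁻¹ :=
        setIntegral_le_setIntegral_of_subset_of_nonpos measurableSet_Ioi Ioc_subset_Ioi_self
          (integrableOn_inv_mul_exp_sub hc) fun _ hu =>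
          (inv_mul_exp_sub_neg hc (le_of_lt hu)).le
    _ ≤ ∫ u in Ioc 0 1, (c * exp 1 - u)⁻¹ :=
        setIntegral_mono_on ((integrableOn_inv_mul_exp_sub hc).mono_set Ioc_subset_Ioi_self)
          hint.1 measurableSet_Ioc hcomp
    _ ≤ log (-(c * exp 1)) := by
        rw [← intervalIntegral.integral_of_le zero_le_one]
        exact intervalIntegral_inv_sub_le_log hce
    _ = log (-c) + 1 := by
        rw [← neg_mul, log_mul (by linarith) (exp_pos 1).ne', log_exp]

end Integrand

theorem H_strictAntiOn : StrictAntiOn H (Iio 0) := fun a ha b hb hab =>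
  setIntegral_lt_setIntegral_of_forall_lt measurableSet_Ioi (by simp)
    (integrableOn_inv_mul_exp_sub hb) (integrableOn_inv_mul_exp_sub ha) fun u hu => by
    rw [inv_lt_inv_of_neg (mul_exp_sub_neg hb (le_of_lt hu)) (mul_exp_sub_neg ha (le_of_lt hu))]
    nlinarith [exp_pos u]

theorem tendsto_H_atBot : Tendsto H atBot (𝓝 0) := by
  have hneg : ∀ᶠ c : ℝ in atBot, c < 0 := eventually_lt_atBot 0
  exact tendsto_of_tendsto_of_tendsto_of_le_of_le' tendsto_inv_atBot_zero tendsto_const_nhds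
    (hneg.mono fun _ => inv_le_H) (hneg.mono fun _ => H_nonpos)

theorem tendsto_H_nhdsLT_zero : Tendsto H (𝓝[<] 0) atBot := by
  have hlog : Tendsto (fun c : ℝ => log (-c) + 1) (𝓝[<] 0) atBot := by
    simp only [log_neg_eq_log]
    exact tendsto_atBot_add_const_right _ 1
      (tendsto_log_nhdsNE_zero.mono_left (nhdsWithin_mono 0 fun _ hc => ne_of_lt hc))
  exact tendsto_atBot_mono' _ (eventually_nhdsWithin_of_forall fun _ => H_le_log_neg_add_one) hlog

/-- `H(c) = ∫₀^∞ du/(c e^u − u)` is strictly decreasing on `(−∞, 0)`, with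
`H(c) → 0` as `c → −∞` and `H(c) → −∞` as `c → 0−`. -/
theorem H_left_branch :
    StrictAntiOn (fun c : ℝ => ∫ u in Set.Ioi (0:ℝ), (c * Real.exp u - u)⁻¹)
      (Set.Iio 0) ∧
    Tendsto (fun c : ℝ => ∫ u in Set.Ioi (0:ℝ), (c * Real.exp u - u)⁻¹)
      atBot (nhds 0) ∧
    Tendsto (fun c : ℝ => ∫ u in Set.Ioi (0:ℝ), (c * Real.exp u - u)⁻¹)
      (nhdsWithin 0 (Set.Iio 0)) atBot :=
  ⟨H_strictAntiOn, tendsto_H_atBot, tendsto_H_nhdsLT_zero⟩
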